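/- For N = 2n, i ≠ j in {1,...,n}, the vector |ij⟩ + c₂|īj̄⟩ + c₃|ji⟩ + c₄|j̄ī⟩ with (c₂,c₃,c₄) = (1,1,1) is an eigenvector of T^{(2)}(θ) with eigenvalue e^{(m_{ij}^{(+)}+m_{ji}^{(+)})θ}, and with (c₂,c₃,c₄) = (1,−1,−1) it is an eigenvector with eigenvalue −e^{(m_{ij}^{(+)}+m_{ji}^{(+)})θ}. -/

import Mathlib

open Matrix
open scoped Kronecker

noncomputable section

/-- The `N × N` matrix unit `(ab)`. -/
def E {N : ℕ} (a b : Fin N) : Matrix (Fin N) (Fin N) ℂ := Matrix.single a b 1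

/-- `f_{ba}^{(ε)}(θ) = (1/2)(e^{m_{ba}^{(+)}θ} ± e^{m_{ba}^{(-)}θ})` (`true ↦ +`). -/
def f {N : ℕ} (m : Bool → Fin N → Fin N → ℝ) (ε : Bool) (b a : Fin N) (θ : ℝ) : ℂ :=
  (1 / 2 : ℂ) * ((Real.exp (m true b a * θ) : ℂ) +
    (if ε then 1 else -1) * (Real.exp (m false b a * θ) : ℂ))

/-- `T^{(1)}_{ab}(θ) = f_{ba}^{(+)}(θ)(ba) + f_{ba}^{(-)}(θ)(b̄ā)`, `ā = 2n+1-a`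
realized by `Fin.rev`. -/
def T1 {N : ℕ} (m : Bool → Fin N → Fin N → ℝ) (θ : ℝ) (a b : Fin N) :
    Matrix (Fin N) (Fin N) ℂ :=
  f m true b a θ • E b a + f m false b a θ • E b.rev a.rev

/-- `𝐓^{(2)}(θ) = ∑_a T^{(2)}_{aa}(θ) = ∑_a ∑_c T^{(1)}_{ac}(θ) ⊗ T^{(1)}_{ca}(θ)`. -/
def T2 {N : ℕ} (m : Bool → Fin N → Fin N → ℝ) (θ : ℝ) :
    Matrix (Fin N × Fin N) (Fin N × Fin N) ℂ :=
  ∑ a : Fin N, ∑ c : Fin N, T1 m θ a c ⊗ₖ T1 m θ c a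

/-- The tensor-product basis vector `|b₁b₂⟩`. -/
def ket {N : ℕ} (b₁ b₂ : Fin N) : Fin N × Fin N → ℂ := Pi.single (b₁, b₂) 1

/-! Expanding `T^{(2)}` in matrix units, `T^{(2)}|b₁b₂⟩` is a combination of `|b₂b₁⟩` and
`|b̄₂b̄₁⟩` alone. Because `f` does not see bars, the sum `|b₁b₂⟩ + |b̄₁b̄₂⟩` is sent to the swapped
sum `|b₂b₁⟩ + |b̄₂b̄₁⟩` times `(f⁺_{b₁b₂} + f⁻_{b₁b₂})(f⁺_{b₂b₁} + f⁻_{b₂b₁}) =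
e^{(m⁺_{b₁b₂} + m⁺_{b₂b₁})θ}`, a factor symmetric in `b₁, b₂`. An operator exchanging two vectors
`u, w` up to a common factor `c` has `u ± w` as eigenvectors with eigenvalues `±c`. -/

lemma E_kronecker_E_mulVec_ket {N : ℕ} (a b c d x y : Fin N) :
    (E a b ⊗ₖ E c d) *ᵥ ket x y = if b = x ∧ d = y then ket a c else 0 := by
  ext ⟨p, q⟩
  simp only [ket, mulVec_single_one, col_apply, kroneckerMap_apply, E, single_apply]
  split_ifs <;> simp_all

lemma mulVec_add_and_mulVec_sub_of_swap {ι R : Type*} [Fintype ι] [CommRing R]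
    {A : Matrix ι ι R} {u w : ι → R} {c : R} (hu : A *ᵥ u = c • w) (hw : A *ᵥ w = c • u) :
    A *ᵥ (u + w) = c • (u + w) ∧ A *ᵥ (u - w) = (-c) • (u - w) := by
  constructor
  · rw [mulVec_add, hu, hw, add_comm, smul_add]
  · rw [mulVec_sub, hu, hw, neg_smul, smul_sub, neg_sub]

section
variable {N : ℕ} (m : Bool → Fin N → Fin N → ℝ)

lemma f_true_add_f_false (b a : Fin N) (θ : ℝ) :
    f m true b a θ + f m false b a θ = Real.exp (m true b a * θ) := by
  simp only [f, Bool.false_eq_true, ↓reduceIte]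
  ring

lemma T2_mulVec_ket (θ : ℝ) (b₁ b₂ : Fin N) :
    T2 m θ *ᵥ ket b₁ b₂ =
      (f m true b₂ b₁ θ * f m true b₁ b₂ θ +
          f m false b₂.rev b₁.rev θ * f m false b₁.rev b₂.rev θ) • ket b₂ b₁ +
        (f m true b₂.rev b₁ θ * f m false b₁ b₂.rev θ +
          f m false b₂ b₁.rev θ * f m true b₁.rev b₂ θ) • ket b₂.rev b₁.rev := by
  simp only [T2, T1, sum_mulVec, add_kronecker, kronecker_add, smul_kronecker, kronecker_smul,
    add_mulVec, smul_mulVec, E_kronecker_E_mulVec_ket, Fin.rev_eq_iff, ite_and, smul_ite, smul_zero,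
    smul_add, Finset.sum_add_distrib, Finset.sum_ite_eq', Finset.mem_univ, if_true,
    Finset.sum_ite_irrel, Finset.sum_const_zero, smul_smul, Fin.rev_rev]
  module

variable (hm : ∀ ε a b, m ε a b = m ε a.rev b ∧ m ε a b = m ε a b.rev)
include hm

lemma f_rev_left (ε : Bool) (b a : Fin N) (θ : ℝ) : f m ε b.rev a θ = f m ε b a θ := by
  simp only [f, ← (hm _ b a).1]

lemma f_rev_right (ε : Bool) (b a : Fin N) (θ : ℝ) : f m ε b a.rev θ = f m ε b a θ := by
  simp only [f, ← (hm _ b a).2]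

lemma T2_mulVec_ket_add_ket_rev (θ : ℝ) (b₁ b₂ : Fin N) :
    T2 m θ *ᵥ (ket b₁ b₂ + ket b₁.rev b₂.rev) =
      (Real.exp ((m true b₁ b₂ + m true b₂ b₁) * θ) : ℂ) • (ket b₂ b₁ + ket b₂.rev b₁.rev) := by
  have hexp : (Real.exp ((m true b₁ b₂ + m true b₂ b₁) * θ) : ℂ) =
      (f m true b₁ b₂ θ + f m false b₁ b₂ θ) * (f m true b₂ b₁ θ + f m false b₂ b₁ θ) := by
    rw [f_true_add_f_false, f_true_add_f_false, add_mul, Real.exp_add, Complex.ofReal_mul]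
  rw [mulVec_add, T2_mulVec_ket, T2_mulVec_ket, hexp]
  simp only [Fin.rev_rev, f_rev_left m hm, f_rev_right m hm]
  module

end

theorem stmt_13_general (n : ℕ) (m : Bool → Fin (2 * n) → Fin (2 * n) → ℝ)
    (hm : ∀ ε a b, m ε a b = m ε a.rev b ∧ m ε a b = m ε a b.rev) (θ : ℝ)
    (i j : Fin (2 * n)) :
    (T2 m θ).mulVec (ket i j + ket i.rev j.rev + ket j i + ket j.rev i.rev) =
        (Real.exp ((m true i j + m true j i) * θ) : ℂ) •
          (ket i j + ket i.rev j.rev + ket j i + ket j.rev i.rev) ∧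
      (T2 m θ).mulVec (ket i j + ket i.rev j.rev - ket j i - ket j.rev i.rev) =
        (-(Real.exp ((m true i j + m true j i) * θ) : ℂ)) •
          (ket i j + ket i.rev j.rev - ket j i - ket j.rev i.rev) := by
  have hij := T2_mulVec_ket_add_ket_rev m hm θ i j
  have hji := T2_mulVec_ket_add_ket_rev m hm θ j i
  rw [add_comm (m true j i)] at hji
  simpa only [add_assoc, sub_sub] using mulVec_add_and_mulVec_sub_of_swap hij hji

/-- For `N = 2n` and `i ≠ j` in `{1,…,n}`, the vector
`|ij⟩ + |īj̄⟩ + c₃|ji⟩ + c₄|j̄ī⟩` is an eigenvector of `𝐓^{(2)}(θ)` with eigenvalue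
`e^{(m_{ij}^{(+)}+m_{ji}^{(+)})θ}` for `(c₃,c₄) = (1,1)`, and with eigenvalue
`-e^{(m_{ij}^{(+)}+m_{ji}^{(+)})θ}` for `(c₃,c₄) = (-1,-1)`. -/
theorem stmt_13 (n : ℕ) (m : Bool → Fin (2 * n) → Fin (2 * n) → ℝ)
    (hm : ∀ ε a b, m ε a b = m ε a.rev b ∧ m ε a b = m ε a b.rev) (θ : ℝ)
    (i j : Fin (2 * n)) (hi : (i : ℕ) < n) (hj : (j : ℕ) < n) (hij : i ≠ j) :
    (T2 m θ).mulVec (ket i j + ket i.rev j.rev + ket j i + ket j.rev i.rev) =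
        (Real.exp ((m true i j + m true j i) * θ) : ℂ) •
          (ket i j + ket i.rev j.rev + ket j i + ket j.rev i.rev) ∧
      (T2 m θ).mulVec (ket i j + ket i.rev j.rev - ket j i - ket j.rev i.rev) =
        (-(Real.exp ((m true i j + m true j i) * θ) : ℂ)) •
          (ket i j + ket i.rev j.rev - ket j i - ket j.rev i.rev) :=
  stmt_13_general n m hm θ i j
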